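/- Let τ be a Borel probability measure on ℝ² invariant with respect to (π/2)-rotations and let φ₀ be the characteristic function of a Borel probability measure on ℝ. Then for every ξ ∈ ℝ the following three integrals vanish: ∫_{ℝ²} Re φ₀(lξ) · Im φ₀(rξ) τ(dl dr) = 0, ∫_{ℝ²} Im φ₀(lξ) · Re φ₀(rξ) τ(dl dr) = 0, and ∫_{ℝ²} Im φ₀(lξ) · Im φ₀(rξ) τ(dl dr) = 0. Consequently, ∫_{ℝ²} φ₀(lξ) φ₀(rξ) τ(dl dr) = ∫_{ℝ²} Re φ₀(lξ) · Re φ₀(rξ) τ(dl dr). -/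

import Mathlib

/-!
Since `φ₀(-x) = conj φ₀(x)`, the real part of `φ₀` is even and the imaginary part is odd.
Integrating against `τ` is unchanged by the rotation `(l, r) ↦ (-r, l)`, which turns
`∫ g(l) h(r)` into `∫ g(r) h(l)` and that in turn into `-∫ g(l) h(r)` when `g` is even and `h`
is odd; likewise it turns `∫ h(l) h(r)` into its negative. Expanding
`φ₀(lξ) φ₀(rξ)` into real and imaginary parts, only `Re φ₀(lξ) Re φ₀(rξ)` survives integration.
-/

open MeasureTheory Filter Set

noncomputable section

/-- Characteristic function of a measure on `ℝ`. -/
def charFn (μ : Measure ℝ) (ξ : ℝ) : ℂ :=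
  ∫ v, Complex.exp (Complex.I * ((ξ * v : ℝ) : ℂ)) ∂μ

/-- `τ` is invariant with respect to `(π/2)`-rotations. -/
def RotationInvariant (τ : Measure (ℝ × ℝ)) : Prop :=
  Measure.map (fun q : ℝ × ℝ => (-q.2, q.1)) τ = τ

open Complex ComplexConjugate

lemma charFn_eq_charFun (μ : Measure ℝ) : charFn μ = charFun μ := by
  ext ξ
  simp only [charFn, charFun_apply_real, ofReal_mul]
  congr with v
  ring_nf

namespace RotationInvariant

variable {τ : Measure (ℝ × ℝ)} (hτ : RotationInvariant τ)
include hτ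

lemma integral_comp_rotate {E : Type*} [NormedAddCommGroup E] [NormedSpace ℝ E]
    (f : ℝ × ℝ → E) : ∫ q, f (-q.2, q.1) ∂τ = ∫ q, f q ∂τ := by
  have hrot : MeasurableEmbedding fun q : ℝ × ℝ => (-q.2, q.1) :=
    (MeasurableEquiv.prodComm.trans ((MeasurableEquiv.neg ℝ).prodCongr
      (MeasurableEquiv.refl ℝ))).measurableEmbedding
  conv_rhs => rw [← hτ, hrot.integral_map]

lemma integral_even_mul_odd_eq_zero {g h : ℝ → ℝ} (hg : g.Even) (hh : h.Odd) :
    ∫ q, g q.1 * h q.2 ∂τ = 0 ∧ ∫ q, h q.1 * g q.2 ∂τ = 0 := by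
  have hA : ∫ q, g q.1 * h q.2 ∂τ = ∫ q, h q.1 * g q.2 ∂τ := by
    rw [← hτ.integral_comp_rotate]
    congr with q
    rw [hg, mul_comm]
  have hB : ∫ q, h q.1 * g q.2 ∂τ = -∫ q, g q.1 * h q.2 ∂τ := by
    rw [← hτ.integral_comp_rotate, ← integral_neg]
    congr with q
    rw [hh]
    ring
  constructor <;> linarith

lemma integral_odd_mul_odd_eq_zero {h : ℝ → ℝ} (hh : h.Odd) :
    ∫ q, h q.1 * h q.2 ∂τ = 0 := by
  have hC : ∫ q, h q.1 * h q.2 ∂τ = -∫ q, h q.1 * h q.2 ∂τ := by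
    conv_lhs => rw [← hτ.integral_comp_rotate]
    rw [← integral_neg]
    congr with q
    rw [hh]
    ring
  linarith

end RotationInvariant

lemma Function.even_re_charFun_mul (μ : Measure ℝ) (ξ : ℝ) :
    (fun x => (charFun μ (x * ξ)).re).Even := fun x => by
  simp only [neg_mul, charFun_neg, conj_re]

lemma Function.odd_im_charFun_mul (μ : Measure ℝ) (ξ : ℝ) :
    (fun x => (charFun μ (x * ξ)).im).Odd := fun x => by
  simp only [neg_mul, charFun_neg, conj_im]

lemma memLp_top_charFun_comp {α : Type*} [MeasurableSpace α] {ν : Measure α}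
    (μ : Measure ℝ) [IsProbabilityMeasure μ] {f : α → ℝ} (hf : Measurable f) :
    MemLp (fun x => charFun μ (f x)) ⊤ ν :=
  memLp_top_of_bound (continuous_charFun.measurable.comp hf).aestronglyMeasurable 1
    (ae_of_all _ fun _ => norm_charFun_le_one _)

lemma integral_mul_eq_re_add_im_mul_I {α : Type*} [MeasurableSpace α] {ν : Measure α}
    [IsFiniteMeasure ν] {F G : α → ℂ} (hF : MemLp F ⊤ ν) (hG : MemLp G ⊤ ν) :
    ∫ x, F x * G x ∂ν =
      ((∫ x, (F x).re * (G x).re ∂ν) - ∫ x, (F x).im * (G x).im ∂ν : ℝ) +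
      ((∫ x, (F x).re * (G x).im ∂ν) + ∫ x, (F x).im * (G x).re ∂ν : ℝ) * I := by
  have hint : ∀ {u v : α → ℝ}, MemLp u ⊤ ν → MemLp v ⊤ ν → Integrable (fun x => u x * v x) ν :=
    fun hu hv => (hv.mul hu).integrable le_top
  have hFG : Integrable (fun x => F x * G x) ν := (hG.mul hF).integrable le_top
  rw [← integral_re_add_im hFG]
  simp only [RCLike.re_to_complex, RCLike.im_to_complex, RCLike.I_to_complex, mul_re, mul_im]
  congr 3
  · exact integral_sub (hint hF.re hG.re) (hint hF.im hG.im)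
  · exact integral_add (hint hF.re hG.im) (hint hF.im hG.re)

/-- for a `(π/2)`-rotation invariant `τ`, the three mixed real/imaginary
integrals vanish, and hence the Wild integral of `φ₀` equals that of its real part. -/
theorem stmt18 (τ : Measure (ℝ × ℝ)) [IsProbabilityMeasure τ]
    (hrot : RotationInvariant τ)
    (μ₀ : Measure ℝ) [IsProbabilityMeasure μ₀]
    (φ₀ : ℝ → ℂ) (hφ₀ : φ₀ = charFn μ₀) (ξ : ℝ) :
    (∫ q : ℝ × ℝ, (φ₀ (q.1 * ξ)).re * (φ₀ (q.2 * ξ)).im ∂τ) = 0 ∧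
    (∫ q : ℝ × ℝ, (φ₀ (q.1 * ξ)).im * (φ₀ (q.2 * ξ)).re ∂τ) = 0 ∧
    (∫ q : ℝ × ℝ, (φ₀ (q.1 * ξ)).im * (φ₀ (q.2 * ξ)).im ∂τ) = 0 ∧
    (∫ q : ℝ × ℝ, φ₀ (q.1 * ξ) * φ₀ (q.2 * ξ) ∂τ) =
      ∫ q : ℝ × ℝ, (((φ₀ (q.1 * ξ)).re * (φ₀ (q.2 * ξ)).re : ℝ) : ℂ) ∂τ := by
  subst hφ₀
  rw [charFn_eq_charFun]
  obtain ⟨hre_im, him_re⟩ := hrot.integral_even_mul_odd_eq_zero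
    (Function.even_re_charFun_mul μ₀ ξ) (Function.odd_im_charFun_mul μ₀ ξ)
  have him_im := hrot.integral_odd_mul_odd_eq_zero (Function.odd_im_charFun_mul μ₀ ξ)
  refine ⟨hre_im, him_re, him_im, ?_⟩
  rw [integral_mul_eq_re_add_im_mul_I (memLp_top_charFun_comp μ₀ (by fun_prop))
    (memLp_top_charFun_comp μ₀ (by fun_prop)), hre_im, him_re, him_im, integral_complex_ofReal]
  simp
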